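/- arXiv:1608.04214 — 5 statements merged into one kernel-verified Lean document; each statement's English description precedes it below -/
import Mathlib

section
/- The square-root upper bound: for any probability measure P' with dP'/dμ = L' square-integrable, satisfying E_μ[L'] = 1, E_μ[(L'-L)²] ≤ δ and E_μ[L'Y] = E_μ[LY], one has E_μ[L'X] ≤ E_μ[LX] + sqrt(δ · det(Σ_μ(X,Y))/det(Σ_μ(Y))). -/
/-!
With `g = L' - L`, the gain `E_μ[L'X] - E_μ[LX]` is `Cov(g, X)`, because `E_μ[g] = 0`. Since
moreover `Cov(g, Yᵢ) = 0`, `X` may be replaced by its regression residual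
`R = X - bᵀY` with `Σ_μ(Y) b = Cov(Y, X)`, and Cauchy–Schwarz gives
`Cov(g, R) ≤ √(Var g · Var R) ≤ √(δ · Var R)`. Finally `Var R` is the Schur complement of
`Σ_μ(Y)` in `Σ_μ(X,Y)`, i.e. `det Σ_μ(X,Y) / det Σ_μ(Y)`.
-/

open MeasureTheory Matrix

noncomputable def covar {Ω : Type*} [MeasurableSpace Ω] (μ : Measure Ω) (f g : Ω → ℝ) : ℝ :=
  ∫ ω, (f ω - ∫ x, f x ∂μ) * (g ω - ∫ x, g x ∂μ) ∂μ

open ProbabilityTheory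

theorem Matrix.det_succ_eq_det_submatrix_succ_mul {R : Type*} [CommRing R] {n : ℕ}
    (M : Matrix (Fin (n + 1)) (Fin (n + 1)) R) (hM : IsUnit (M.submatrix Fin.succ Fin.succ).det) :
    M.det = (M.submatrix Fin.succ Fin.succ).det *
      (M 0 0 - (fun j ↦ M 0 j.succ) ⬝ᵥ ((M.submatrix Fin.succ Fin.succ)⁻¹ *ᵥ fun i ↦ M i.succ 0)) := by
  let e : Fin n ⊕ Unit ≃ Fin (n + 1) :=
    ((finSuccEquiv n).trans (Equiv.optionEquivSumPUnit _)).symm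
  have : Invertible (M.submatrix Fin.succ Fin.succ) := (M.submatrix _ _).invertibleOfIsUnitDet hM
  have hblocks : M.submatrix e e = fromBlocks (M.submatrix Fin.succ Fin.succ)
      (of fun i _ ↦ M i.succ 0) (of fun _ j ↦ M 0 j.succ) (of fun _ _ ↦ M 0 0) := by
    ext (i | i) (j | j) <;> simp [e]
  rw [← det_submatrix_equiv_self e, hblocks, det_fromBlocks₁₁, det_unique (n := Unit),
    dotProduct_mulVec]
  simp only [invOf_eq_nonsing_inv, sub_apply, of_apply, mul_apply, vecMul, dotProduct]

section Covariance

variable {Ω : Type*} [MeasurableSpace Ω] {μ : Measure Ω}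

theorem integral_mul_le_sqrt_integral_sq_mul_integral_sq {f g : Ω → ℝ} (hf : MemLp f 2 μ)
    (hg : MemLp g 2 μ) :
    ∫ ω, f ω * g ω ∂μ ≤ √((∫ ω, f ω ^ 2 ∂μ) * ∫ ω, g ω ^ 2 ∂μ) := by
  have hholder := integral_mul_norm_le_Lp_mul_Lq Real.HolderConjugate.two_two
    (by simpa using hf) (by simpa using hg)
  simp only [Real.norm_eq_abs, Real.rpow_two, sq_abs, ← Real.sqrt_eq_rpow] at hholder
  calc ∫ ω, f ω * g ω ∂μ ≤ ∫ ω, |f ω| * |g ω| ∂μ :=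
        integral_mono (hf.integrable_mul hg) (hf.abs.integrable_mul hg.abs)
          fun ω ↦ (le_abs_self _).trans (abs_mul _ _).le
    _ ≤ _ := hholder
    _ = _ := (Real.sqrt_mul (integral_nonneg fun ω ↦ sq_nonneg _) _).symm

theorem covariance_le_sqrt_variance_mul_variance [IsFiniteMeasure μ] {X Y : Ω → ℝ}
    (hX : MemLp X 2 μ) (hY : MemLp Y 2 μ) :
    cov[X, Y; μ] ≤ √(Var[X; μ] * Var[Y; μ]) := by
  rw [variance_eq_integral hX.aemeasurable, variance_eq_integral hY.aemeasurable]
  exact integral_mul_le_sqrt_integral_sq_mul_integral_sq (hX.sub (memLp_const _))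
    (hY.sub (memLp_const _))

theorem covariance_eq_integral_mul_of_integral_eq_zero [IsProbabilityMeasure μ] {g Z : Ω → ℝ}
    (hg : MemLp g 2 μ) (hZ : MemLp Z 2 μ) (hg0 : μ[g] = 0) :
    cov[g, Z; μ] = ∫ ω, g ω * Z ω ∂μ := by
  rw [covariance_eq_sub hg hZ, hg0, zero_mul, sub_zero]
  rfl

theorem integral_mul_sub_integral_mul_eq_covariance [IsProbabilityMeasure μ] {L L' Z : Ω → ℝ}
    (hL : MemLp L 2 μ) (hL' : MemLp L' 2 μ) (hZ : MemLp Z 2 μ) (hmean : μ[L'] = μ[L]) :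
    ∫ ω, L' ω * Z ω ∂μ - ∫ ω, L ω * Z ω ∂μ = cov[fun ω ↦ L' ω - L ω, Z; μ] := by
  have hmean_sub : μ[fun ω ↦ L' ω - L ω] = 0 := by
    rw [integral_sub (hL'.integrable one_le_two) (hL.integrable one_le_two), hmean, sub_self]
  rw [covariance_eq_integral_mul_of_integral_eq_zero (g := fun ω ↦ L' ω - L ω) (hL'.sub hL) hZ
    hmean_sub]
  simp only [sub_mul]
  exact (integral_sub (hL'.integrable_mul hZ) (hL.integrable_mul hZ)).symm

noncomputable def covarianceMatrix {ι : Type*} (μ : Measure Ω) (Y : ι → Ω → ℝ) : Matrix ι ι ℝ :=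
  Matrix.of fun i j ↦ cov[Y i, Y j; μ]

theorem det_covarianceMatrix_cons {n : ℕ} {X : Ω → ℝ} {Y : Fin n → Ω → ℝ}
    (hX : AEMeasurable X μ) (hY : IsUnit (covarianceMatrix μ Y).det) :
    (covarianceMatrix μ (Fin.cons X Y)).det = (covarianceMatrix μ Y).det *
      (Var[X; μ] - (fun j ↦ cov[X, Y j; μ]) ⬝ᵥ
        ((covarianceMatrix μ Y)⁻¹ *ᵥ fun i ↦ cov[Y i, X; μ])) := by
  have hsub : (covarianceMatrix μ (Fin.cons X Y)).submatrix Fin.succ Fin.succ =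
      covarianceMatrix μ Y := by
    ext i j
    simp [covarianceMatrix]
  rw [det_succ_eq_det_submatrix_succ_mul _ (hsub ▸ hY), hsub]
  simp [covarianceMatrix, covariance_self hX]

def regressionResidual {ι : Type*} [Fintype ι] (X : Ω → ℝ) (Y : ι → Ω → ℝ) (b : ι → ℝ) :
    Ω → ℝ :=
  fun ω ↦ X ω - ∑ i, b i * Y i ω

variable {ι : Type*} [Fintype ι] {X : Ω → ℝ} {Y : ι → Ω → ℝ}

theorem MeasureTheory.MemLp.regressionResidual (hX : MemLp X 2 μ) (hY : ∀ i, MemLp (Y i) 2 μ)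
    (b : ι → ℝ) : MemLp (regressionResidual X Y b) 2 μ :=
  hX.sub (memLp_finsetSum _ fun i _ ↦ (hY i).const_mul (b i))

variable [IsFiniteMeasure μ]

theorem covariance_regressionResidual_right {Z : Ω → ℝ} (hZ : MemLp Z 2 μ) (hX : MemLp X 2 μ)
    (hY : ∀ i, MemLp (Y i) 2 μ) (b : ι → ℝ) :
    cov[Z, regressionResidual X Y b; μ] = cov[Z, X; μ] - ∑ i, b i * cov[Z, Y i; μ] := by
  unfold regressionResidual
  rw [covariance_fun_sub_right hZ hX (memLp_finsetSum _ fun i _ ↦ (hY i).const_mul (b i)),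
    covariance_fun_sum_right (fun i ↦ (hY i).const_mul (b i)) hZ]
  simp only [covariance_const_mul_right]

theorem covariance_regressionResidual_eq_zero (hX : MemLp X 2 μ) (hY : ∀ i, MemLp (Y i) 2 μ)
    {b : ι → ℝ} (hb : covarianceMatrix μ Y *ᵥ b = fun i ↦ cov[Y i, X; μ]) (j : ι) :
    cov[Y j, regressionResidual X Y b; μ] = 0 := by
  rw [covariance_regressionResidual_right (hY j) hX hY, ← congrFun hb j]
  simp only [covarianceMatrix, mulVec, dotProduct, of_apply, mul_comm, sub_self]

theorem variance_regressionResidual (hX : MemLp X 2 μ) (hY : ∀ i, MemLp (Y i) 2 μ)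
    {b : ι → ℝ} (hb : covarianceMatrix μ Y *ᵥ b = fun i ↦ cov[Y i, X; μ]) :
    Var[regressionResidual X Y b; μ] = Var[X; μ] - (fun i ↦ cov[X, Y i; μ]) ⬝ᵥ b := by
  have hR := hX.regressionResidual hY b
  have hRY (i : ι) : cov[regressionResidual X Y b, Y i; μ] = 0 := by
    rw [covariance_comm, covariance_regressionResidual_eq_zero hX hY hb]
  rw [← covariance_self hR.aemeasurable, covariance_regressionResidual_right hR hX hY]
  simp only [hRY, mul_zero, Finset.sum_const_zero, sub_zero]
  rw [covariance_comm, covariance_regressionResidual_right hX hX hY,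
    covariance_self hX.aemeasurable, dotProduct]
  simp only [mul_comm]

theorem det_covarianceMatrix_cons_div_det {n : ℕ} {Y : Fin n → Ω → ℝ} (hX : MemLp X 2 μ)
    (hY : ∀ i, MemLp (Y i) 2 μ) (hdet : IsUnit (covarianceMatrix μ Y).det) :
    (covarianceMatrix μ (Fin.cons X Y)).det / (covarianceMatrix μ Y).det =
      Var[regressionResidual X Y ((covarianceMatrix μ Y)⁻¹ *ᵥ fun i ↦ cov[Y i, X; μ]); μ] := by
  have hb : covarianceMatrix μ Y *ᵥ ((covarianceMatrix μ Y)⁻¹ *ᵥ fun i ↦ cov[Y i, X; μ]) =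
      fun i ↦ cov[Y i, X; μ] := by
    rw [mulVec_mulVec, mul_nonsing_inv _ hdet, one_mulVec]
  rw [det_covarianceMatrix_cons hX.aemeasurable hdet, variance_regressionResidual hX hY hb,
    mul_div_cancel_left₀ _ hdet.ne_zero]

end Covariance

theorem stmt5_general {Ω : Type*} [MeasurableSpace Ω] (μ : Measure Ω) [IsProbabilityMeasure μ]
    (n : ℕ) (X : Ω → ℝ) (Y : Fin n → Ω → ℝ) (L : Ω → ℝ)
    (hX : MemLp X 2 μ) (hY : ∀ i, MemLp (Y i) 2 μ)
    (hLmean : ∫ ω, L ω ∂μ = 1) (hL : MemLp L 2 μ)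
    (SXY : Matrix (Fin (n + 1)) (Fin (n + 1)) ℝ)
    (hSXY : SXY = Matrix.of fun i j =>
      covar μ ((Fin.cons X Y : Fin (n+1) → Ω → ℝ) i) ((Fin.cons X Y : Fin (n+1) → Ω → ℝ) j))
    (SY : Matrix (Fin n) (Fin n) ℝ)
    (hSY : SY = Matrix.of fun i j => covar μ (Y i) (Y j))
    (hinvY : IsUnit SY.det)
    (δ : ℝ)
    (L' : Ω → ℝ) (hL' : MemLp L' 2 μ)
    (hL'mean : ∫ ω, L' ω ∂μ = 1)
    (hdiv : ∫ ω, (L' ω - L ω) ^ 2 ∂μ ≤ δ)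
    (hmom : ∀ i, ∫ ω, L' ω * Y i ω ∂μ = ∫ ω, L ω * Y i ω ∂μ) :
    ∫ ω, L' ω * X ω ∂μ ≤ ∫ ω, L ω * X ω ∂μ + Real.sqrt (δ * (SXY.det / SY.det)) := by
  -- `covar` is `ProbabilityTheory.covariance` unfolded
  change SXY = covarianceMatrix μ (Fin.cons X Y) at hSXY
  change SY = covarianceMatrix μ Y at hSY
  subst hSXY hSY
  set b := (covarianceMatrix μ Y)⁻¹ *ᵥ fun i ↦ cov[Y i, X; μ]
  set g := fun ω ↦ L' ω - L ω
  have hg : MemLp g 2 μ := hL'.sub hL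
  have hmean : μ[L'] = μ[L] := hL'mean.trans hLmean.symm
  have hgain : ∫ ω, L' ω * X ω ∂μ - ∫ ω, L ω * X ω ∂μ = cov[g, regressionResidual X Y b; μ] := by
    have hgY (i : Fin n) : cov[g, Y i; μ] = 0 := by
      rw [← integral_mul_sub_integral_mul_eq_covariance hL hL' (hY i) hmean, hmom, sub_self]
    simp only [covariance_regressionResidual_right hg hX hY, hgY, mul_zero, Finset.sum_const_zero,
      sub_zero]
    exact integral_mul_sub_integral_mul_eq_covariance hL hL' hX hmean
  calc ∫ ω, L' ω * X ω ∂μ = ∫ ω, L ω * X ω ∂μ + cov[g, regressionResidual X Y b; μ] := by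
        linarith
    _ ≤ ∫ ω, L ω * X ω ∂μ + √(Var[g; μ] * Var[regressionResidual X Y b; μ]) := by
        gcongr
        exact covariance_le_sqrt_variance_mul_variance hg (hX.regressionResidual hY b)
    _ ≤ _ := by
        rw [det_covarianceMatrix_cons_div_det hX hY hinvY]
        gcongr
        · exact variance_nonneg _ _
        · exact (variance_le_expectation_sq hg.1).trans hdiv

/-- The square-root upper bound: any density `L'` in the `δ`-neighborhood of `L`
preserving the mean of `Y` satisfies
`E_μ[L'X] ≤ E_μ[LX] + √(δ · det Σ_μ(X,Y) / det Σ_μ(Y))`. -/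
theorem stmt5 {Ω : Type*} [MeasurableSpace Ω] (μ : Measure Ω) [IsProbabilityMeasure μ]
    (n : ℕ) (X : Ω → ℝ) (Y : Fin n → Ω → ℝ) (L : Ω → ℝ)
    (hX : MemLp X 2 μ) (hY : ∀ i, MemLp (Y i) 2 μ)
    (hLnn : ∀ ω, 0 ≤ L ω) (hLmean : ∫ ω, L ω ∂μ = 1) (hL : MemLp L 2 μ)
    (SXY : Matrix (Fin (n + 1)) (Fin (n + 1)) ℝ)
    (hSXY : SXY = Matrix.of fun i j =>
      covar μ ((Fin.cons X Y : Fin (n+1) → Ω → ℝ) i) ((Fin.cons X Y : Fin (n+1) → Ω → ℝ) j))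
    (SY : Matrix (Fin n) (Fin n) ℝ)
    (hSY : SY = Matrix.of fun i j => covar μ (Y i) (Y j))
    (hinv : IsUnit SXY.det) (hinvY : IsUnit SY.det)
    (δ : ℝ) (hδ : 0 < δ)
    (L' : Ω → ℝ) (hL'nn : ∀ ω, 0 ≤ L' ω) (hL' : MemLp L' 2 μ)
    (hL'mean : ∫ ω, L' ω ∂μ = 1)
    (hdiv : ∫ ω, (L' ω - L ω) ^ 2 ∂μ ≤ δ)
    (hmom : ∀ i, ∫ ω, L' ω * Y i ω ∂μ = ∫ ω, L ω * Y i ω ∂μ) :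
    ∫ ω, L' ω * X ω ∂μ ≤ ∫ ω, L ω * X ω ∂μ + Real.sqrt (δ * (SXY.det / SY.det)) :=
  stmt5_general μ n X Y L hX hY hLmean hL SXY hSXY SY hSY hinvY δ L' hL' hL'mean hdiv hmom
end

section
/- The square-root lower bound: for any probability measure P' with dP'/dμ = L' square-integrable, satisfying E_μ[L'] = 1, E_μ[(L'-L)²] ≤ δ and E_μ[L'Y] = E_μ[LY], one has E_μ[L'X] ≥ E_μ[LX] - sqrt(δ · det(Σ_μ(X,Y))/det(Σ_μ(Y))). -/
/-!
Put `g = L' - L`. The constraints say that `g` is uncorrelated with every `Yᵢ`, so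
`E_μ[L'X] - E_μ[LX] = Cov(g, X) = Cov(g, R)` for the residual `R = X - βᵀY` of the
regression of `X` on `Y`, `β = Σ_μ(Y)⁻¹ Cov(Y, X)`. Cauchy–Schwarz gives
`Cov(g, R)² ≤ Var g · Var R`, where `Var g ≤ E_μ[g²] ≤ δ` and
`Var R = Var X - Cov(X, Y) Σ_μ(Y)⁻¹ Cov(Y, X)` is the Schur complement of `Σ_μ(Y)` in
`Σ_μ(X,Y)`, i.e. `det Σ_μ(X,Y) / det Σ_μ(Y)`.
-/

open MeasureTheory Matrix

open ProbabilityTheory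

lemma Matrix.det_eq_det_submatrix_succ_mul {R : Type*} [CommRing R] {n : ℕ}
    (M : Matrix (Fin (n + 1)) (Fin (n + 1)) R)
    (hA : IsUnit (M.submatrix Fin.succ Fin.succ).det) :
    M.det = (M.submatrix Fin.succ Fin.succ).det * (M 0 0 -
      (fun j ↦ M 0 j.succ) ⬝ᵥ ((M.submatrix Fin.succ Fin.succ)⁻¹ *ᵥ fun i ↦ M i.succ 0)) := by
  let := (M.submatrix Fin.succ Fin.succ).invertibleOfIsUnitDet hA
  let e : Fin n ⊕ Unit ≃ Fin (n + 1) :=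
    (Equiv.optionEquivSumPUnit (Fin n)).symm.trans (finSuccEquiv n).symm
  have hblocks : M.submatrix e e = fromBlocks (M.submatrix Fin.succ Fin.succ)
      (of fun i _ ↦ M i.succ 0) (of fun _ j ↦ M 0 j.succ) (of fun _ _ ↦ M 0 0) := by
    ext (i | _) (j | _) <;> simp [e]
  rw [← det_submatrix_equiv_self e, hblocks, det_fromBlocks₁₁, det_unique (n := Unit),
    dotProduct_mulVec]
  simp [dotProduct, vecMul, mul_apply, invOf_eq_nonsing_inv]

lemma covar_eq_covariance {Ω : Type*} [MeasurableSpace Ω] (μ : Measure Ω) (f g : Ω → ℝ) :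
    covar μ f g = cov[f, g; μ] := rfl

namespace ProbabilityTheory

variable {Ω ι : Type*} [MeasurableSpace Ω] {μ : Measure Ω} {X Z : Ω → ℝ}

lemma covariance_sq_le_variance_mul [IsFiniteMeasure μ] (hX : MemLp X 2 μ) (hZ : MemLp Z 2 μ) :
    cov[X, Z; μ] ^ 2 ≤ Var[X; μ] * Var[Z; μ] := by
  have hquad : ∀ t : ℝ, 0 ≤ Var[X; μ] * (t * t) + 2 * cov[X, Z; μ] * t + Var[Z; μ] := fun t ↦ by
    have h := variance_nonneg (t • X + Z) μ
    rw [variance_add (hX.const_smul t) hZ, variance_smul, covariance_smul_left] at h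
    linarith
  have := discrim_le_zero hquad
  rw [discrim] at this
  linarith

variable [Fintype ι] {Y : ι → Ω → ℝ}

lemma variance_sub_sum_smul [IsFiniteMeasure μ] (hX : MemLp X 2 μ) (hY : ∀ i, MemLp (Y i) 2 μ)
    (β : ι → ℝ) :
    Var[X - ∑ i, β i • Y i; μ] = Var[X; μ] - 2 * ∑ i, β i * cov[X, Y i; μ]
      + ∑ i, ∑ j, β i * β j * cov[Y i, Y j; μ] := by
  have hβY : ∀ i, MemLp (β i • Y i) 2 μ := fun i ↦ (hY i).const_smul (β i)
  rw [variance_sub hX (memLp_finsetSum' _ fun i _ ↦ hβY i), variance_sum hβY,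
    covariance_sum_right hβY hX]
  simp only [covariance_smul_left, covariance_smul_right, mul_assoc, mul_left_comm]

lemma covariance_sub_sum_smul_right [IsFiniteMeasure μ] (hZ : MemLp Z 2 μ) (hX : MemLp X 2 μ)
    (hY : ∀ i, MemLp (Y i) 2 μ) (β : ι → ℝ) :
    cov[Z, X - ∑ i, β i • Y i; μ] = cov[Z, X; μ] - ∑ i, β i * cov[Z, Y i; μ] := by
  have hβY : ∀ i, MemLp (β i • Y i) 2 μ := fun i ↦ (hY i).const_smul (β i)
  rw [covariance_sub_right hZ hX (memLp_finsetSum' _ fun i _ ↦ hβY i),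
    covariance_sum_right hβY hZ]
  simp only [covariance_smul_right]

lemma covariance_sub_left_eq_integral_mul_sub [IsProbabilityMeasure μ] {L L' W : Ω → ℝ}
    (hL : MemLp L 2 μ) (hL' : MemLp L' 2 μ) (hW : MemLp W 2 μ)
    (hmean : ∫ ω, L' ω ∂μ = ∫ ω, L ω ∂μ) :
    cov[L' - L, W; μ] = ∫ ω, L' ω * W ω ∂μ - ∫ ω, L ω * W ω ∂μ := by
  rw [covariance_sub_left hL' hL hW, covariance_eq_sub hL' hW, covariance_eq_sub hL hW, hmean]
  simp only [Pi.mul_apply]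
  ring

lemma covariance_sq_le_variance_mul_variance_sub_sum_smul [IsFiniteMeasure μ] (hZ : MemLp Z 2 μ)
    (hX : MemLp X 2 μ) (hY : ∀ i, MemLp (Y i) 2 μ) (hZY : ∀ i, cov[Z, Y i; μ] = 0) (β : ι → ℝ) :
    cov[Z, X; μ] ^ 2 ≤ Var[Z; μ] * Var[X - ∑ i, β i • Y i; μ] := by
  have hcov : cov[Z, X; μ] = cov[Z, X - ∑ i, β i • Y i; μ] := by
    simp [covariance_sub_sum_smul_right hZ hX hY, hZY]
  rw [hcov]
  exact covariance_sq_le_variance_mul hZ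
    (hX.sub (memLp_finsetSum' _ fun i _ ↦ (hY i).const_smul (β i)))

lemma variance_sub_sum_smul_of_mulVec_eq [IsFiniteMeasure μ] (hX : MemLp X 2 μ)
    (hY : ∀ i, MemLp (Y i) 2 μ) {β : ι → ℝ}
    (hβ : (of fun i j ↦ cov[Y i, Y j; μ]) *ᵥ β = fun i ↦ cov[X, Y i; μ]) :
    Var[X - ∑ i, β i • Y i; μ] = Var[X; μ] - (fun i ↦ cov[X, Y i; μ]) ⬝ᵥ β := by
  have hrow : ∀ i, ∑ j, β j * cov[Y i, Y j; μ] = cov[X, Y i; μ] := fun i ↦ by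
    simpa [mulVec, dotProduct, mul_comm] using congrFun hβ i
  simp only [variance_sub_sum_smul hX hY, mul_assoc, ← Finset.mul_sum, hrow, dotProduct]
  simp only [mul_comm (β _)]
  ring

end ProbabilityTheory

theorem stmt6_general {Ω : Type*} [MeasurableSpace Ω] (μ : Measure Ω) [IsProbabilityMeasure μ]
    (n : ℕ) (X : Ω → ℝ) (Y : Fin n → Ω → ℝ) (L : Ω → ℝ)
    (hX : MemLp X 2 μ) (hY : ∀ i, MemLp (Y i) 2 μ)
    (hLmean : ∫ ω, L ω ∂μ = 1) (hL : MemLp L 2 μ)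
    (SXY : Matrix (Fin (n + 1)) (Fin (n + 1)) ℝ)
    (hSXY : SXY = Matrix.of fun i j =>
      covar μ ((Fin.cons X Y : Fin (n+1) → Ω → ℝ) i) ((Fin.cons X Y : Fin (n+1) → Ω → ℝ) j))
    (SY : Matrix (Fin n) (Fin n) ℝ)
    (hSY : SY = Matrix.of fun i j => covar μ (Y i) (Y j))
    (hinvY : IsUnit SY.det)
    (δ : ℝ)
    (L' : Ω → ℝ) (hL' : MemLp L' 2 μ)
    (hL'mean : ∫ ω, L' ω ∂μ = 1)
    (hdiv : ∫ ω, (L' ω - L ω) ^ 2 ∂μ ≤ δ)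
    (hmom : ∀ i, ∫ ω, L' ω * Y i ω ∂μ = ∫ ω, L ω * Y i ω ∂μ) :
    ∫ ω, L ω * X ω ∂μ - Real.sqrt (δ * (SXY.det / SY.det)) ≤ ∫ ω, L' ω * X ω ∂μ := by
  set c : Fin n → ℝ := fun i ↦ cov[X, Y i; μ]
  set β := SY⁻¹ *ᵥ c
  have hSY_cov : SY = of fun i j ↦ cov[Y i, Y j; μ] := by simp only [hSY, covar_eq_covariance]
  have hSYβ : SY *ᵥ β = c := by
    rw [mulVec_mulVec, mul_nonsing_inv _ hinvY, one_mulVec]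
  have hschur : SXY.det / SY.det = Var[X; μ] - c ⬝ᵥ β := by
    have hsub : SXY.submatrix Fin.succ Fin.succ = SY := by
      ext i j; simp [hSXY, hSY]
    rw [SXY.det_eq_det_submatrix_succ_mul (hsub ▸ hinvY), hsub,
      mul_div_cancel_left₀ _ hinvY.ne_zero]
    simp [hSXY, covar_eq_covariance, covariance_self hX.aemeasurable, covariance_comm _ X, c, β]
  have hresidual : Var[X - ∑ i, β i • Y i; μ] = Var[X; μ] - c ⬝ᵥ β :=
    variance_sub_sum_smul_of_mulVec_eq hX hY (hSY_cov ▸ hSYβ)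
  have hmean : ∫ ω, L' ω ∂μ = ∫ ω, L ω ∂μ := hL'mean.trans hLmean.symm
  have hgY : ∀ i, cov[L' - L, Y i; μ] = 0 := fun i ↦ by
    rw [covariance_sub_left_eq_integral_mul_sub hL hL' (hY i) hmean, hmom i, sub_self]
  have hgX := covariance_sub_left_eq_integral_mul_sub hL hL' hX hmean
  have hvar : Var[L' - L; μ] ≤ δ :=
    (variance_le_expectation_sq (hL'.sub hL).aestronglyMeasurable).trans (by simpa using hdiv)
  have hbound : (∫ ω, L' ω * X ω ∂μ - ∫ ω, L ω * X ω ∂μ) ^ 2 ≤ δ * (SXY.det / SY.det) := by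
    rw [← hgX, hschur, ← hresidual]
    exact (covariance_sq_le_variance_mul_variance_sub_sum_smul (hL'.sub hL) hX hY hgY β).trans
      (mul_le_mul_of_nonneg_right hvar (variance_nonneg _ _))
  linarith [neg_abs_le (∫ ω, L' ω * X ω ∂μ - ∫ ω, L ω * X ω ∂μ), Real.abs_le_sqrt hbound]

/-- The square-root lower bound: any density `L'` in the `δ`-neighborhood of `L`
preserving the mean of `Y` satisfies
`E_μ[L'X] ≥ E_μ[LX] - √(δ · det Σ_μ(X,Y) / det Σ_μ(Y))`. -/
theorem stmt6 {Ω : Type*} [MeasurableSpace Ω] (μ : Measure Ω) [IsProbabilityMeasure μ]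
    (n : ℕ) (X : Ω → ℝ) (Y : Fin n → Ω → ℝ) (L : Ω → ℝ)
    (hX : MemLp X 2 μ) (hY : ∀ i, MemLp (Y i) 2 μ)
    (hLnn : ∀ ω, 0 ≤ L ω) (hLmean : ∫ ω, L ω ∂μ = 1) (hL : MemLp L 2 μ)
    (SXY : Matrix (Fin (n + 1)) (Fin (n + 1)) ℝ)
    (hSXY : SXY = Matrix.of fun i j =>
      covar μ ((Fin.cons X Y : Fin (n+1) → Ω → ℝ) i) ((Fin.cons X Y : Fin (n+1) → Ω → ℝ) j))
    (SY : Matrix (Fin n) (Fin n) ℝ)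
    (hSY : SY = Matrix.of fun i j => covar μ (Y i) (Y j))
    (hinv : IsUnit SXY.det) (hinvY : IsUnit SY.det)
    (δ : ℝ) (hδ : 0 < δ)
    (L' : Ω → ℝ) (hL'nn : ∀ ω, 0 ≤ L' ω) (hL' : MemLp L' 2 μ)
    (hL'mean : ∫ ω, L' ω ∂μ = 1)
    (hdiv : ∫ ω, (L' ω - L ω) ^ 2 ∂μ ≤ δ)
    (hmom : ∀ i, ∫ ω, L' ω * Y i ω ∂μ = ∫ ω, L ω * Y i ω ∂μ) :
    ∫ ω, L ω * X ω ∂μ - Real.sqrt (δ * (SXY.det / SY.det)) ≤ ∫ ω, L' ω * X ω ∂μ :=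
  stmt6_general μ n X Y L hX hY hLmean hL SXY hSXY SY hSY hinvY δ L' hL' hL'mean hdiv hmom
end

section
/- With one moment constraint, the square-root bounds are E[X] ± sqrt(δ · Var(X) · (1 - Corr(X,Y)²)): for any L' ≥ 0 with E[L'] = 1, E[(L'-1)²] ≤ δ and E[L'Y] = E[Y], one has |E[L'X] - E[X]| ≤ sqrt(δ · Var(X)(1 - Corr(X,Y)²)). -/
/-!
Write `E'[Z] = E[L' Z]`. Since `E[L'] = 1` and `E[L' Y] = E[Y]`, the signed measure `(L' - 1) dP`
annihilates constants and `Y`, so `E'[X] - E[X] = E[(L' - 1) R]` for the residual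
`R = (X - E X) - β (Y - E Y)` of the regression of `X` on `Y`, for any `β`. Cauchy–Schwarz gives
`(E'[X] - E[X])² ≤ E[(L' - 1)²] E[R²]`, and for `β = Cov(X,Y) / Var(Y)` one has
`E[R²] = Var(X) - Cov(X,Y)² / Var(Y) = Var(X) (1 - Corr(X,Y)²)`.
-/

open MeasureTheory

namespace MeasureTheory

variable {Ω : Type*} [MeasurableSpace Ω] {μ : Measure Ω}

lemma MemLp.inner_toLp_eq_integral_mul {f g : Ω → ℝ} (hf : MemLp f 2 μ) (hg : MemLp g 2 μ) :
    inner ℝ (hf.toLp f) (hg.toLp g) = ∫ ω, f ω * g ω ∂μ := by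
  rw [L2.inner_def]
  refine integral_congr_ae ?_
  filter_upwards [hf.coeFn_toLp, hg.coeFn_toLp] with ω hfω hgω
  simp [hfω, hgω, mul_comm]

lemma sq_integral_mul_le_integral_sq_mul_integral_sq {f g : Ω → ℝ}
    (hf : MemLp f 2 μ) (hg : MemLp g 2 μ) :
    (∫ ω, f ω * g ω ∂μ) ^ 2 ≤ (∫ ω, f ω ^ 2 ∂μ) * ∫ ω, g ω ^ 2 ∂μ := by
  have h := real_inner_mul_inner_self_le (hf.toLp f) (hg.toLp g)
  simp only [hf.inner_toLp_eq_integral_mul hf, hf.inner_toLp_eq_integral_mul hg,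
    hg.inner_toLp_eq_integral_mul hg] at h
  simpa only [sq] using h

lemma integral_sq_sub_div_mul {f k : Ω → ℝ} (hf : MemLp f 2 μ) (hk : MemLp k 2 μ) :
    ∫ ω, (f ω - (∫ x, f x * k x ∂μ) / (∫ x, k x ^ 2 ∂μ) * k ω) ^ 2 ∂μ
      = ∫ ω, f ω ^ 2 ∂μ - (∫ ω, f ω * k ω ∂μ) ^ 2 / ∫ ω, k ω ^ 2 ∂μ := by
  set a := ∫ x, f x * k x ∂μ
  set v := ∫ x, k x ^ 2 ∂μ
  have hfk : Integrable (fun ω ↦ 2 * (a / v) * (f ω * k ω)) μ :=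
    (hf.integrable_mul hk).const_mul _
  have hf2 : Integrable (fun ω ↦ f ω ^ 2 - 2 * (a / v) * (f ω * k ω)) μ :=
    hf.integrable_sq.sub hfk
  have expand : ∀ ω, (f ω - a / v * k ω) ^ 2
      = f ω ^ 2 - 2 * (a / v) * (f ω * k ω) + (a / v) ^ 2 * k ω ^ 2 := fun ω ↦ by ring
  simp_rw [expand]
  rw [integral_add hf2 (hk.integrable_sq.const_mul _), integral_sub hf.integrable_sq hfk,
    integral_const_mul, integral_const_mul]
  rcases eq_or_ne v 0 with hv | hv
  · simp [hv] -- `a / 0 = 0`: both sides are `∫ f²`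
  · field_simp
    ring

variable [IsProbabilityMeasure μ]

lemma integral_sub_one_mul_sub_const {L Z : Ω → ℝ} (hL : MemLp L 2 μ) (hZ : MemLp Z 2 μ)
    (hL1 : ∫ ω, L ω ∂μ = 1) (c : ℝ) :
    ∫ ω, (L ω - 1) * (Z ω - c) ∂μ = ∫ ω, L ω * Z ω ∂μ - ∫ ω, Z ω ∂μ := by
  have hLZ : Integrable (fun ω ↦ L ω * Z ω) μ := hL.integrable_mul hZ
  have hLi : Integrable L μ := hL.integrable one_le_two
  have hZi : Integrable Z μ := hZ.integrable one_le_two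
  have hLZc : Integrable (fun ω ↦ L ω * Z ω - c * L ω) μ := hLZ.sub (hLi.const_mul c)
  have hZc : Integrable (fun ω ↦ Z ω - c) μ := hZi.sub (integrable_const c)
  have expand : ∀ ω, (L ω - 1) * (Z ω - c) = (L ω * Z ω - c * L ω) - (Z ω - c) :=
    fun ω ↦ by ring
  simp_rw [expand]
  rw [integral_sub hLZc hZc, integral_sub hLZ (hLi.const_mul c),
    integral_sub hZi (integrable_const c), integral_const_mul, hL1]
  simp

lemma integral_mul_sub_integral_eq_integral_sub_one_mul_residual {L X Y : Ω → ℝ}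
    (hL : MemLp L 2 μ) (hX : MemLp X 2 μ) (hY : MemLp Y 2 μ)
    (hL1 : ∫ ω, L ω ∂μ = 1) (hLY : ∫ ω, L ω * Y ω ∂μ = ∫ ω, Y ω ∂μ) (β : ℝ) :
    ∫ ω, L ω * X ω ∂μ - ∫ ω, X ω ∂μ
      = ∫ ω, (L ω - 1) * ((X ω - ∫ x, X x ∂μ) - β * (Y ω - ∫ x, Y x ∂μ)) ∂μ := by
  have hLc : MemLp (fun ω ↦ L ω - 1) 2 μ := hL.sub (memLp_const 1)
  have hXc : MemLp (fun ω ↦ X ω - ∫ x, X x ∂μ) 2 μ := hX.sub (memLp_const _)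
  have hYc : MemLp (fun ω ↦ Y ω - ∫ x, Y x ∂μ) 2 μ := hY.sub (memLp_const _)
  have expand : ∀ ω, (L ω - 1) * ((X ω - ∫ x, X x ∂μ) - β * (Y ω - ∫ x, Y x ∂μ))
      = (L ω - 1) * (X ω - ∫ x, X x ∂μ) - β * ((L ω - 1) * (Y ω - ∫ x, Y x ∂μ)) :=
    fun ω ↦ by ring
  have hLX : Integrable (fun ω ↦ (L ω - 1) * (X ω - ∫ x, X x ∂μ)) μ := hLc.integrable_mul hXc
  have hLY' : Integrable (fun ω ↦ β * ((L ω - 1) * (Y ω - ∫ x, Y x ∂μ))) μ :=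
    (hLc.integrable_mul hYc).const_mul β
  simp_rw [expand]
  rw [integral_sub hLX hLY',
    integral_const_mul, integral_sub_one_mul_sub_const hL hX hL1,
    integral_sub_one_mul_sub_const hL hY hL1, hLY]
  ring

end MeasureTheory

lemma mul_one_sub_div_sqrt_mul_sq {a c : ℝ} (ha : 0 < a) (hc : 0 ≤ c) (b : ℝ) :
    a * (1 - (b / √(a * c)) ^ 2) = a - b ^ 2 / c := by
  rw [div_pow, Real.sq_sqrt (by positivity), mul_sub, mul_one, mul_div_assoc',
    mul_div_mul_left _ _ ha.ne']

theorem stmt8_general {Ω : Type*} [MeasurableSpace Ω] (μ : Measure Ω) [IsProbabilityMeasure μ]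
    (X Y : Ω → ℝ) (hX : MemLp X 2 μ) (hY : MemLp Y 2 μ)
    (varX varY cov corr : ℝ)
    (hvarX : varX = ∫ ω, (X ω - ∫ x, X x ∂μ) ^ 2 ∂μ) (hvarXpos : 0 < varX)
    (hvarY : varY = ∫ ω, (Y ω - ∫ x, Y x ∂μ) ^ 2 ∂μ)
    (hcov : cov = ∫ ω, (X ω - ∫ x, X x ∂μ) * (Y ω - ∫ x, Y x ∂μ) ∂μ)
    (hcorr : corr = cov / Real.sqrt (varX * varY))
    (δ : ℝ)
    (L' : Ω → ℝ) (hL' : MemLp L' 2 μ)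
    (hL'mean : ∫ ω, L' ω ∂μ = 1)
    (hdiv : ∫ ω, (L' ω - 1) ^ 2 ∂μ ≤ δ)
    (hmom : ∫ ω, L' ω * Y ω ∂μ = ∫ ω, Y ω ∂μ) :
    |(∫ ω, L' ω * X ω ∂μ) - ∫ ω, X ω ∂μ| ≤
      Real.sqrt (δ * (varX * (1 - corr ^ 2))) := by
  have hXc : MemLp (fun ω ↦ X ω - ∫ x, X x ∂μ) 2 μ := hX.sub (memLp_const _)
  have hYc : MemLp (fun ω ↦ Y ω - ∫ x, Y x ∂μ) 2 μ := hY.sub (memLp_const _)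
  have hvarY_nonneg : 0 ≤ varY := hvarY ▸ integral_nonneg fun _ ↦ sq_nonneg _
  have hresidual : ∫ ω, ((X ω - ∫ x, X x ∂μ) - cov / varY * (Y ω - ∫ x, Y x ∂μ)) ^ 2 ∂μ
      = varX * (1 - corr ^ 2) := by
    rw [hcorr, mul_one_sub_div_sqrt_mul_sq hvarXpos hvarY_nonneg, hcov, hvarX, hvarY]
    exact integral_sq_sub_div_mul hXc hYc
  refine Real.abs_le_sqrt ?_
  calc (∫ ω, L' ω * X ω ∂μ - ∫ ω, X ω ∂μ) ^ 2
      = (∫ ω, (L' ω - 1) * ((X ω - ∫ x, X x ∂μ) - cov / varY * (Y ω - ∫ x, Y x ∂μ)) ∂μ) ^ 2 := by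
        rw [integral_mul_sub_integral_eq_integral_sub_one_mul_residual hL' hX hY hL'mean hmom]
    _ ≤ (∫ ω, (L' ω - 1) ^ 2 ∂μ)
          * ∫ ω, ((X ω - ∫ x, X x ∂μ) - cov / varY * (Y ω - ∫ x, Y x ∂μ)) ^ 2 ∂μ :=
        sq_integral_mul_le_integral_sq_mul_integral_sq (hL'.sub (memLp_const 1))
          (hXc.sub (hYc.const_mul _))
    _ ≤ δ * (varX * (1 - corr ^ 2)) := by
        rw [hresidual]
        exact mul_le_mul_of_nonneg_right hdiv (hresidual ▸ integral_nonneg fun _ ↦ sq_nonneg _)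

/-- One moment constraint: the square-root bounds read
`|E[L'X] - E[X]| ≤ √(δ · Var(X)(1 - Corr(X,Y)²))`. Here `μ = P` and `L ≡ 1`. -/
theorem stmt8 {Ω : Type*} [MeasurableSpace Ω] (μ : Measure Ω) [IsProbabilityMeasure μ]
    (X Y : Ω → ℝ) (hX : MemLp X 2 μ) (hY : MemLp Y 2 μ)
    (varX varY cov corr : ℝ)
    (hvarX : varX = ∫ ω, (X ω - ∫ x, X x ∂μ) ^ 2 ∂μ) (hvarXpos : 0 < varX)
    (hvarY : varY = ∫ ω, (Y ω - ∫ x, Y x ∂μ) ^ 2 ∂μ) (hvarYpos : 0 < varY)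
    (hcov : cov = ∫ ω, (X ω - ∫ x, X x ∂μ) * (Y ω - ∫ x, Y x ∂μ) ∂μ)
    (hcorr : corr = cov / Real.sqrt (varX * varY)) (hcorrlt : |corr| < 1)
    (δ : ℝ) (hδ : 0 < δ)
    (L' : Ω → ℝ) (hL'nn : ∀ ω, 0 ≤ L' ω) (hL' : MemLp L' 2 μ)
    (hL'mean : ∫ ω, L' ω ∂μ = 1)
    (hdiv : ∫ ω, (L' ω - 1) ^ 2 ∂μ ≤ δ)
    (hmom : ∫ ω, L' ω * Y ω ∂μ = ∫ ω, Y ω ∂μ) :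
    |(∫ ω, L' ω * X ω ∂μ) - ∫ ω, X ω ∂μ| ≤
      Real.sqrt (δ * (varX * (1 - corr ^ 2))) :=
  stmt8_general μ X Y hX hY varX varY cov corr hvarX hvarXpos hvarY hcov hcorr δ L' hL' hL'mean hdiv
    hmom
end

section
/- If the distribution of X under P has a point mass p > 0 at its essential supremum x̄ and δ ≥ 1/p - 1, then L* = (1/p)·1{X = x̄} satisfies E[L*] = 1, E[(L*-1)²] ≤ δ, and E[L*X] = x̄, which is the maximal possible value of E[L'X] over all L' ≥ 0 with E[L'] = 1. -/
/-!
On the atom `A = {X = x̄}` of mass `p`, the density `L* = p⁻¹·1_A` integrates to `1`, has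
`E[(L* - 1)²] = p·(p⁻¹ - 1)² + (1 - p) = p⁻¹ - 1`, and puts all of its mass where `X = x̄`, so
`E[L* X] = x̄`. Conversely any probability density `L' ≥ 0` gives `E[L' X] ≤ E[L'] · x̄ = x̄`
because `X ≤ x̄` almost surely.
-/

open MeasureTheory

section

variable {Ω : Type*} [MeasurableSpace Ω] {μ : Measure Ω} {A : Set Ω}

lemma integral_const_mul_indicator_one [IsFiniteMeasure μ] (hA : MeasurableSet A) (c : ℝ) :
    ∫ ω, c * A.indicator (fun _ => (1 : ℝ)) ω ∂μ = c * μ.real A := by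
  rw [integral_const_mul, ← Pi.one_def, integral_indicator_one hA]

lemma integral_inv_mul_indicator_one [IsFiniteMeasure μ] (hA : MeasurableSet A)
    (hμA : μ.real A ≠ 0) :
    ∫ ω, (μ.real A)⁻¹ * A.indicator (fun _ => (1 : ℝ)) ω ∂μ = 1 := by
  rw [integral_const_mul_indicator_one hA, inv_mul_cancel₀ hμA]

lemma integral_inv_mul_indicator_one_sub_one_sq [IsProbabilityMeasure μ] (hA : MeasurableSet A)
    (hμA : μ.real A ≠ 0) :
    ∫ ω, ((μ.real A)⁻¹ * A.indicator (fun _ => (1 : ℝ)) ω - 1) ^ 2 ∂μ = (μ.real A)⁻¹ - 1 := by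
  set c := (μ.real A)⁻¹
  -- `1_A² = 1_A` makes the square affine in the indicator.
  have hsq : ∀ ω, (c * A.indicator (fun _ => (1 : ℝ)) ω - 1) ^ 2
      = (c ^ 2 - 2 * c) * A.indicator (fun _ => (1 : ℝ)) ω + 1 := by
    intro ω
    by_cases hω : ω ∈ A
    · simp [hω]
      ring
    · simp [hω]
  have hint : Integrable (fun ω => (c ^ 2 - 2 * c) * A.indicator (fun _ => (1 : ℝ)) ω) μ :=
    ((integrable_const 1).indicator hA).const_mul _
  simp_rw [hsq]
  rw [integral_add hint (integrable_const 1), integral_const_mul_indicator_one hA,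
    integral_const, probReal_univ, one_smul]
  linear_combination (c - 2) * inv_mul_cancel₀ hμA

lemma integral_const_mul_indicator_one_mul_of_eqOn [IsFiniteMeasure μ] (hA : MeasurableSet A)
    {X : Ω → ℝ} {x : ℝ} (hX : ∀ ω ∈ A, X ω = x) (c : ℝ) :
    ∫ ω, c * A.indicator (fun _ => (1 : ℝ)) ω * X ω ∂μ = c * x * μ.real A := by
  have hprod : ∀ ω, c * A.indicator (fun _ => (1 : ℝ)) ω * X ω
      = c * x * A.indicator (fun _ => (1 : ℝ)) ω := by
    intro ω
    by_cases hω : ω ∈ A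
    · simp [hω, hX]
    · simp [hω]
  simp_rw [hprod]
  exact integral_const_mul_indicator_one hA _

lemma integral_mul_le_integral_mul_of_ae_le {L X : Ω → ℝ} {x : ℝ} (hL : ∀ ω, 0 ≤ L ω)
    (hLint : Integrable L μ) (hLX : Integrable (fun ω => L ω * X ω) μ)
    (hX : ∀ᵐ ω ∂μ, X ω ≤ x) :
    ∫ ω, L ω * X ω ∂μ ≤ (∫ ω, L ω ∂μ) * x := by
  rw [← integral_mul_const]
  refine integral_mono_ae hLX (hLint.mul_const x) ?_
  filter_upwards [hX] with ω hω
  exact mul_le_mul_of_nonneg_left hω (hL ω)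

end

/-- If `X` has a point mass `p > 0` at its essential supremum `x̄` and
`δ ≥ 1/p - 1`, then `L* = (1/p)·1{X = x̄}` is feasible and achieves
`E[L*X] = x̄`, the maximal possible value of `E[L'X]`. -/
theorem stmt12 {Ω : Type*} [MeasurableSpace Ω] (μ : Measure Ω) [IsProbabilityMeasure μ]
    (X : Ω → ℝ) (hXmeas : Measurable X) (xbar : ℝ)
    (hXle : ∀ᵐ ω ∂μ, X ω ≤ xbar)
    (p : ℝ) (hp : p = (μ {ω | X ω = xbar}).toReal) (hppos : 0 < p)
    (δ : ℝ) (hδ : 1 / p - 1 ≤ δ)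
    (Lstar : Ω → ℝ)
    (hLstar : Lstar = fun ω => (1 / p) * Set.indicator {ω | X ω = xbar} (fun _ => (1 : ℝ)) ω) :
    (∫ ω, Lstar ω ∂μ) = 1 ∧
    (∫ ω, (Lstar ω - 1) ^ 2 ∂μ) ≤ δ ∧
    (∫ ω, Lstar ω * X ω ∂μ) = xbar ∧
    (∀ L' : Ω → ℝ, (∀ ω, 0 ≤ L' ω) → Integrable L' μ →
      Integrable (fun ω => L' ω * X ω) μ → (∫ ω, L' ω ∂μ) = 1 →
      (∫ ω, L' ω * X ω ∂μ) ≤ xbar) := by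
  have hA : MeasurableSet {ω | X ω = xbar} := hXmeas (measurableSet_singleton xbar)
  rw [← measureReal_def] at hp
  subst hLstar hp
  simp only [one_div] at hδ ⊢
  refine ⟨integral_inv_mul_indicator_one hA hppos.ne',
    (integral_inv_mul_indicator_one_sub_one_sq hA hppos.ne').trans_le hδ, ?_, ?_⟩
  · rw [integral_const_mul_indicator_one_mul_of_eqOn hA (fun _ h => h)]
    field_simp
  · intro L' hL' hL'int hL'X hL'one
    simpa [hL'one] using integral_mul_le_integral_mul_of_ae_le hL' hL'int hL'X hXle
end

section
/- For Y uniform (Lebesgue) on [0,1] as the dominating measure, the variance under μ = Leb of X(z) = 2((1-z)Y ∨ z(1-Y)) times (1 - Corr_μ(X,Y)²) equals (4/3)z³(1-z)³; equivalently, det(Σ_μ(X,Y))/det(Σ_μ(Y)) = (4/3)z³(1-z)³ for z ∈ (0,1). -/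
open MeasureTheory ProbabilityTheory

/- Under the uniform law on `[0,1]` each entry of the covariance matrix is a first or second moment
of `X` and `Y`. Since `X = 2z(1-Y)` for `Y ≤ z` and `X = 2(1-z)Y` for `Y ≥ z`, every moment splits
into two integrals of quadratic polynomials, and the claim is a polynomial identity in `z`. -/

theorem integral_quadratic (a b c₀ c₁ c₂ : ℝ) :
    ∫ x in a..b, (c₀ + c₁ * x + c₂ * x ^ 2) =
      c₀ * (b - a) + c₁ * (b ^ 2 - a ^ 2) / 2 + c₂ * (b ^ 3 - a ^ 3) / 3 := by
  have hderiv : ∀ x ∈ Set.uIcc a b,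
      HasDerivAt (fun x => c₀ * x + c₁ / 2 * x ^ 2 + c₂ / 3 * x ^ 3)
        (c₀ + c₁ * x + c₂ * x ^ 2) x := by
    intro x _
    refine ((((hasDerivAt_id x).const_mul c₀).add ((hasDerivAt_pow 2 x).const_mul (c₁ / 2))).add
      ((hasDerivAt_pow 3 x).const_mul (c₂ / 3))).congr_deriv ?_
    push_cast
    ring
  rw [intervalIntegral.integral_eq_sub_of_hasDerivAt hderiv
    (Continuous.intervalIntegrable (by fun_prop) a b)]
  ring

theorem intervalIntegral_eq_add_of_eqOn {f g₁ g₂ : ℝ → ℝ} {a b c : ℝ} (hab : a ≤ b) (hbc : b ≤ c)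
    (hf : IntervalIntegrable f volume a c)
    (h₁ : Set.EqOn f g₁ (Set.Icc a b)) (h₂ : Set.EqOn f g₂ (Set.Icc b c)) :
    ∫ x in a..c, f x = (∫ x in a..b, g₁ x) + ∫ x in b..c, g₂ x := by
  have hb : b ∈ Set.uIcc a c := Set.mem_uIcc_of_le hab hbc
  rw [← intervalIntegral.integral_add_adjacent_intervals
      (hf.mono_set (Set.uIcc_subset_uIcc_left hb)) (hf.mono_set (Set.uIcc_subset_uIcc_right hb))]
  congr 1
  · exact intervalIntegral.integral_congr (by rwa [Set.uIcc_of_le hab])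
  · exact intervalIntegral.integral_congr (by rwa [Set.uIcc_of_le hbc])

theorem covariance_volume_restrict_Icc {f g : ℝ → ℝ} (hf : Continuous f) (hg : Continuous g) :
    cov[f, g; volume.restrict (Set.Icc 0 1)] =
      (∫ x in (0 : ℝ)..1, f x * g x) - (∫ x in (0 : ℝ)..1, f x) * ∫ x in (0 : ℝ)..1, g x := by
  have : IsProbabilityMeasure (volume.restrict (Set.Icc (0 : ℝ) 1)) := ⟨by simp⟩
  have memLp_two {h : ℝ → ℝ} (hh : Continuous h) : MemLp h 2 (volume.restrict (Set.Icc 0 1)) :=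
    (memLp_two_iff_integrable_sq hh.aestronglyMeasurable).2 (hh.pow 2).integrableOn_Icc
  simp only [covariance_eq_sub (memLp_two hf) (memLp_two hg), Pi.mul_apply,
    intervalIntegral.integral_of_le zero_le_one, integral_Icc_eq_integral_Ioc]

noncomputable def vShape (z ω : ℝ) : ℝ := 2 * max ((1 - z) * ω) (z * (1 - ω))

section vShape

variable {z ω : ℝ}

@[fun_prop]
theorem continuous_vShape (z : ℝ) : Continuous (vShape z) := by
  unfold vShape
  fun_prop

theorem vShape_of_le (h : ω ≤ z) : vShape z ω = 2 * z * (1 - ω) := by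
  rw [vShape, max_eq_right (by linarith [show (1 - z) * ω - z * (1 - ω) = ω - z by ring])]
  ring

theorem vShape_of_ge (h : z ≤ ω) : vShape z ω = 2 * (1 - z) * ω := by
  rw [vShape, max_eq_left (by linarith [show (1 - z) * ω - z * (1 - ω) = ω - z by ring])]
  ring

theorem integral_vShape (hz₀ : 0 ≤ z) (hz₁ : z ≤ 1) :
    ∫ ω in (0 : ℝ)..1, vShape z ω = 1 - z + z ^ 2 := by
  rw [intervalIntegral_eq_add_of_eqOn hz₀ hz₁ ((continuous_vShape z).intervalIntegrable 0 1)
      (g₁ := fun ω => 2 * z + (-2 * z) * ω + 0 * ω ^ 2)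
      (g₂ := fun ω => 0 + 2 * (1 - z) * ω + 0 * ω ^ 2)
      (fun ω hω => by simp only [vShape_of_le hω.2]; ring)
      (fun ω hω => by simp only [vShape_of_ge hω.1]; ring),
    integral_quadratic, integral_quadratic]
  ring

theorem integral_vShape_sq (hz₀ : 0 ≤ z) (hz₁ : z ≤ 1) :
    ∫ ω in (0 : ℝ)..1, vShape z ω ^ 2 = 4 / 3 * (1 - 2 * z + z ^ 2 + 2 * z ^ 3 - z ^ 4) := by
  rw [intervalIntegral_eq_add_of_eqOn hz₀ hz₁
      (Continuous.intervalIntegrable (by fun_prop) 0 1)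
      (g₁ := fun ω => 4 * z ^ 2 + (-8 * z ^ 2) * ω + 4 * z ^ 2 * ω ^ 2)
      (g₂ := fun ω => 0 + 0 * ω + 4 * (1 - z) ^ 2 * ω ^ 2)
      (fun ω hω => by simp only [vShape_of_le hω.2]; ring)
      (fun ω hω => by simp only [vShape_of_ge hω.1]; ring),
    integral_quadratic, integral_quadratic]
  ring

theorem integral_vShape_mul_id (hz₀ : 0 ≤ z) (hz₁ : z ≤ 1) :
    ∫ ω in (0 : ℝ)..1, vShape z ω * ω = (2 - 2 * z + z ^ 3) / 3 := by
  rw [intervalIntegral_eq_add_of_eqOn hz₀ hz₁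
      (Continuous.intervalIntegrable (by fun_prop) 0 1)
      (g₁ := fun ω => 0 + 2 * z * ω + (-2 * z) * ω ^ 2)
      (g₂ := fun ω => 0 + 0 * ω + 2 * (1 - z) * ω ^ 2)
      (fun ω hω => by simp only [vShape_of_le hω.2]; ring)
      (fun ω hω => by simp only [vShape_of_ge hω.1]; ring),
    integral_quadratic, integral_quadratic]
  ring

end vShape

/-- For the uniform dominating measure on `[0,1]`, `Y(ω) = ω` and
`X = 2((1-z)Y ∨ z(1-Y))`, one has
`Var(X) - Cov(X,Y)²/Var(Y) = (4/3) z³ (1-z)³`, i.e.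
`det Σ(X,Y)/det Σ(Y) = (4/3) z³ (1-z)³`. -/
theorem stmt16 (z : ℝ) (hz : z ∈ Set.Ioo (0 : ℝ) 1)
    (μ : Measure ℝ) (hμ : μ = volume.restrict (Set.Icc (0 : ℝ) 1))
    (X : ℝ → ℝ) (hX : X = fun ω => 2 * max ((1 - z) * ω) (z * (1 - ω)))
    (varX covXY varY : ℝ)
    (hvarX : varX = ∫ ω, (X ω - ∫ x, X x ∂μ) ^ 2 ∂μ)
    (hcov : covXY = ∫ ω, (X ω - ∫ x, X x ∂μ) * (ω - ∫ x, x ∂μ) ∂μ)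
    (hvarY : varY = ∫ ω, (ω - ∫ x, x ∂μ) ^ 2 ∂μ) :
    varX - covXY ^ 2 / varY = (4 / 3) * z ^ 3 * (1 - z) ^ 3 := by
  obtain ⟨hz₀, hz₁⟩ := Set.Ioo_subset_Icc_self hz
  obtain rfl : X = vShape z := hX
  have hvarX' : varX = cov[vShape z, vShape z; μ] := by simp only [hvarX, covariance, sq]
  have hcov' : covXY = cov[vShape z, id; μ] := hcov
  have hvarY' : varY = cov[id, id; μ] := by simp only [hvarY, covariance, sq]; rfl
  rw [hvarX', hcov', hvarY', hμ, covariance_volume_restrict_Icc (continuous_vShape z)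
    (continuous_vShape z), covariance_volume_restrict_Icc (continuous_vShape z) continuous_id,
    covariance_volume_restrict_Icc continuous_id continuous_id]
  simp only [id, integral_vShape hz₀ hz₁, integral_vShape_sq hz₀ hz₁,
    integral_vShape_mul_id hz₀ hz₁, integral_id, ← sq, integral_pow]
  field_simp
  ring
end
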